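/- For every finite poset P, iir(P) = |P| if and only if the canonical inclusion representation of P (assigning D_P[x] to each x) is irreducible. -/

import Mathlib

open scoped Classical

/-- `S` is an inclusion representation of the poset `α`. -/
def IsRepr {α β : Type} [PartialOrder α] (S : α → Finset β) : Prop :=
  ∀ x y : α, x ≤ y ↔ S x ⊆ S y

/-- The ground set of a representation. -/
noncomputable def ground {α β : Type} [Fintype α] (S : α → Finset β) : Finset β :=
  Finset.univ.biUnion S

/-- `S` is a reduction of `T`. -/
def IsReduction {α β γ : Type} [Fintype α] (S : α → Finset β) (T : α → Finset γ) : Prop :=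
  (ground S).card ≤ (ground T).card ∧ ∀ x, (S x).card ≤ (T x).card

/-- An inclusion representation is irreducible if it admits no strict reduction. -/
def IrreducibleRepr {α β : Type} [PartialOrder α] [Fintype α] (S : α → Finset β) : Prop :=
  IsRepr S ∧ ∀ T : α → Finset ℕ, IsRepr T → IsReduction T S → IsReduction S T

/-- Maximum ground-set size over irreducible inclusion representations. -/
noncomputable def iir (α : Type) [PartialOrder α] [Fintype α] : ℕ :=
  sSup {w | ∃ S : α → Finset ℕ, IrreducibleRepr S ∧ (ground S).card = w}

/-- Cube height. -/
noncomputable def chHeight (α : Type) [PartialOrder α] [Fintype α] : ℕ :=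
  sInf {h | ∃ S : α → Finset ℕ, IsRepr S ∧ ∀ x, (S x).card ≤ h}

/-- 2-dimension. -/
noncomputable def dim2 (α : Type) [PartialOrder α] [Fintype α] : ℕ :=
  sInf {w | ∃ S : α → Finset ℕ, IsRepr S ∧ (ground S).card = w}

/-- Cube width. -/
noncomputable def cw (α : Type) [PartialOrder α] [Fintype α] : ℕ :=
  sInf {w | ∃ S : α → Finset ℕ, IsRepr S ∧ (ground S).card = w ∧ ∀ x, (S x).card ≤ chHeight α}

/-- Closed down-set `D_P[x]` as a finset. -/
noncomputable def downSet {α : Type} [PartialOrder α] [Fintype α] (x : α) : Finset α :=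
  Finset.univ.filter (· ≤ x)

/-- The canonical inclusion representation. -/
noncomputable def canonical (α : Type) [PartialOrder α] [Fintype α] : α → Finset α :=
  fun x => downSet x

/-- No Block is a Chain Property. -/
def NoBlockChain (α : Type) [PartialOrder α] : Prop :=
  ∀ x : α, ∃ y : α, ¬ x ≤ y ∧ ¬ y ≤ x

/-- Two Down Property. -/
def TwoDown (α : Type) [PartialOrder α] : Prop :=
  ∀ y : α, (∃ a b : α, a ≠ b ∧ a ⋖ y ∧ b ⋖ y) →
    ∃ z : α, (∀ u : α, u < y → u < z) ∧ ¬ y ≤ z ∧ ¬ z ≤ y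

/-- Parallel Pair Property. -/
def ParallelPair (α : Type) [PartialOrder α] : Prop :=
  ∀ x y : α, ¬ x ≤ y → ¬ y ≤ x →
    (∃ y' : α, (∀ u : α, u < x → u < y') ∧ y ≤ y' ∧ ¬ x ≤ y' ∧ ¬ y' ≤ x) ∨
    (∃ x' : α, (∀ u : α, u < y → u < x') ∧ x ≤ x' ∧ ¬ y ≤ x' ∧ ¬ x' ≤ y)

/-- A vertical decomposition of a poset into two non-empty parts. -/
def IsVerticalDecomp {α : Type} [PartialOrder α] (A B : Set α) : Prop :=
  A.Nonempty ∧ B.Nonempty ∧ (∀ x, x ∈ A ∨ x ∈ B) ∧ ∀ x ∈ A, ∀ y ∈ B, x < y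

/-- A block is a chain or a vertical prime. -/
def IsBlock (α : Type) [PartialOrder α] : Prop :=
  (∀ x y : α, x ≤ y ∨ y ≤ x) ∨ ¬ ∃ A B : Set α, IsVerticalDecomp A B


section Aux

open Finset

variable {α : Type} [PartialOrder α] [Fintype α]

lemma mem_ground_iff {β : Type} {S : α → Finset β} {g : β} :
    g ∈ ground S ↔ ∃ x, g ∈ S x := by
  simp [ground]

lemma IsRepr.mono {β : Type} {S : α → Finset β} (h : IsRepr S) {x y : α} (hxy : x ≤ y) :
    S x ⊆ S y := (h x y).mp hxy

/-- The "upset" of a ground element. -/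
noncomputable def tset (S : α → Finset ℕ) (g : ℕ) : Finset α :=
  Finset.univ.filter (fun v => g ∈ S v)

lemma mem_tset {S : α → Finset ℕ} {g : ℕ} {v : α} : v ∈ tset S g ↔ g ∈ S v := by
  simp [tset]

lemma hall_cond {S : α → Finset ℕ} (hS : IrreducibleRepr S) :
    ∀ B : Finset ℕ, B ⊆ ground S → B.card ≤ (B.biUnion (tset S)).card := by
  classical
  by_contra hcon
  push_neg at hcon
  set Vio : Set ℕ := {k | ∃ B : Finset ℕ, B ⊆ ground S ∧ (B.biUnion (tset S)).card < B.card ∧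
    B.card = k} with hVio
  have hne : Vio.Nonempty := by
    obtain ⟨B, hB1, hB2⟩ := hcon
    exact ⟨B.card, B, hB1, hB2, rfl⟩
  obtain ⟨B, hBsub, hBlt, hBcard⟩ := Nat.sInf_mem hne
  set M : Finset α := B.biUnion (tset S) with hM
  have hmin : ∀ B' : Finset ℕ, B' ⊆ ground S → B'.card < B.card →
      B'.card ≤ (B'.biUnion (tset S)).card := by
    intro B' h1 h2
    by_contra h3
    push_neg at h3
    have hmem : B'.card ∈ Vio := ⟨B', h1, h3, rfl⟩
    have := Nat.sInf_le hmem
    omega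
  have hSsubg : ∀ v : α, S v ⊆ ground S := fun v g hg => mem_ground_iff.mpr ⟨v, hg⟩
  -- key counting inequality
  have key : ∀ v : α, (M.filter (· ≤ v)).card ≤ (B.filter (· ∈ S v)).card := by
    intro v
    rcases (M.filter (· ≤ v)).eq_empty_or_nonempty with hW | hW
    · simp [hW]
    · set W : Finset α := M.filter (· ≤ v) with hWdef
      set F : Finset ℕ := B.filter (fun g => g ∉ S v) with hF
      obtain ⟨x, hx⟩ := hW
      have hxW : x ∈ M ∧ x ≤ v := mem_filter.mp hx
      obtain ⟨g, hgB, hgx⟩ := mem_biUnion.mp hxW.1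
      have hgSv : g ∈ S v := hS.1.mono hxW.2 (mem_tset.mp hgx)
      have hFssub : F ⊆ B := filter_subset _ _
      have hgnF : g ∉ F := by simp [hF, hgSv]
      have hFproper : F.card < B.card :=
        card_lt_card (Finset.ssubset_iff_of_subset hFssub |>.mpr ⟨g, hgB, hgnF⟩)
      have hHallF : F.card ≤ (F.biUnion (tset S)).card :=
        hmin F (hFssub.trans hBsub) hFproper
      have hFsub : F.biUnion (tset S) ⊆ M \ W := by
        intro y hy
        obtain ⟨g', hg'F, hg'y⟩ := mem_biUnion.mp hy
        have hg'B : g' ∈ B := hFssub hg'F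
        refine mem_sdiff.mpr ⟨mem_biUnion.mpr ⟨g', hg'B, hg'y⟩, ?_⟩
        intro hyW
        have hyv : y ≤ v := (mem_filter.mp hyW).2
        have : g' ∈ S v := hS.1.mono hyv (mem_tset.mp hg'y)
        exact (mem_filter.mp hg'F).2 this
      have hWM : W ⊆ M := filter_subset _ _
      have h1 : F.card ≤ (M \ W).card := le_trans hHallF (card_le_card hFsub)
      have h2 : (M \ W).card = M.card - W.card := card_sdiff_of_subset hWM
      have h3 : W.card ≤ M.card := card_le_card hWM
      have h4 : (B.filter (· ∈ S v)).card + F.card = B.card := by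
        rw [hF]
        exact card_filter_add_card_filter_not _
      omega
  -- the replacement representation
  obtain ⟨f, hf⟩ := exists_injective_nat α
  set K : ℕ := (ground S).sup id + 1 with hK
  set h : α → ℕ := fun x => K + f x with hh
  have hhinj : Function.Injective h := by
    intro a b hab
    exact hf (by simpa [hh] using hab)
  have hhng : ∀ x : α, h x ∉ ground S := by
    intro x hx
    have := Finset.le_sup (f := id) hx
    simp only [id] at this
    simp only [hh] at this
    omega
  set T : α → Finset ℕ := fun v => (S v \ B) ∪ ((M.filter (· ≤ v)).image h) with hT
  have hTrepr : IsRepr T := by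
    intro x y
    constructor
    · intro hxy
      apply union_subset_union
      · exact sdiff_subset_sdiff (hS.1.mono hxy) (Finset.Subset.refl _)
      · exact image_subset_image (monotone_filter_right _ (fun a _ ha => le_trans ha hxy))
    · intro hsub
      by_contra hxy
      have hnsub : ¬ S x ⊆ S y := fun hc => hxy ((hS.1 x y).mpr hc)
      obtain ⟨g, hgx, hgy⟩ := Finset.not_subset.mp hnsub
      by_cases hgB : g ∈ B
      · have hxM : x ∈ M := mem_biUnion.mpr ⟨g, hgB, mem_tset.mpr hgx⟩
        have h1 : h x ∈ T x :=
          mem_union_right _ (mem_image_of_mem h (mem_filter.mpr ⟨hxM, le_refl x⟩))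
        have h2 := hsub h1
        rcases mem_union.mp h2 with h3 | h3
        · exact hhng x (hSsubg y (mem_sdiff.mp h3).1)
        · obtain ⟨x', hx', hxx'⟩ := mem_image.mp h3
          have hxe : x' = x := hhinj hxx'
          subst hxe
          exact hxy (mem_filter.mp hx').2
      · have h1 : g ∈ T x := mem_union_left _ (mem_sdiff.mpr ⟨hgx, hgB⟩)
        have h2 := hsub h1
        rcases mem_union.mp h2 with h3 | h3
        · exact hgy (mem_sdiff.mp h3).1
        · obtain ⟨x', _, hgx'⟩ := mem_image.mp h3
          exact hhng x' (by rw [hgx']; exact hSsubg x hgx)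
  have hTcard : ∀ v, (T v).card ≤ (S v).card := by
    intro v
    have h1 : (T v).card ≤ (S v \ B).card + ((M.filter (· ≤ v)).image h).card :=
      card_union_le _ _
    have h2 : ((M.filter (· ≤ v)).image h).card ≤ (M.filter (· ≤ v)).card := card_image_le
    have h3 := key v
    have h4 : (S v).filter (· ∈ B) = B.filter (· ∈ S v) := by
      ext g
      simp only [mem_filter]
      tauto
    have h5 : ((S v).filter (· ∈ B)).card + ((S v).filter (fun g => g ∉ B)).card
        = (S v).card := card_filter_add_card_filter_not _
    have h6 : S v \ B = (S v).filter (fun g => g ∉ B) := sdiff_eq_filter _ _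
    rw [h4] at h5
    rw [← h6] at h5
    omega
  have hTg : (ground T).card < (ground S).card := by
    have hsub : ground T ⊆ (ground S \ B) ∪ M.image h := by
      intro g hg
      obtain ⟨v, hv⟩ := mem_ground_iff.mp hg
      rcases mem_union.mp hv with h3 | h3
      · exact mem_union_left _
          (mem_sdiff.mpr ⟨hSsubg v (mem_sdiff.mp h3).1, (mem_sdiff.mp h3).2⟩)
      · exact mem_union_right _ (image_subset_image (filter_subset _ _) h3)
    have h1 : (ground T).card ≤ (ground S \ B).card + (M.image h).card :=
      le_trans (card_le_card hsub) (card_union_le _ _)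
    have h2 : (ground S \ B).card = (ground S).card - B.card := card_sdiff_of_subset hBsub
    have h3 : (M.image h).card ≤ M.card := card_image_le
    have h4 : B.card ≤ (ground S).card := card_le_card hBsub
    omega
  have hred : IsReduction T S := ⟨le_of_lt hTg, hTcard⟩
  have := (hS.2 T hTrepr hred).1
  omega

lemma exists_injection {S : α → Finset ℕ} (hS : IrreducibleRepr S) :
    ∃ φ : {g // g ∈ ground S} → α, Function.Injective φ ∧ ∀ g, (g : ℕ) ∈ S (φ g) := by
  classical
  have hall := (Finset.all_card_le_biUnion_card_iff_exists_injective
    (fun g : {g // g ∈ ground S} => tset S (g : ℕ))).mp ?_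
  · obtain ⟨φ, h1, h2⟩ := hall
    exact ⟨φ, h1, fun g => mem_tset.mp (h2 g)⟩
  · intro s
    have hcor : s.biUnion (fun g => tset S (g : ℕ)) = (s.image Subtype.val).biUnion (tset S) := by
      ext x
      simp [mem_biUnion]
    rw [hcor]
    have hcards : (s.image Subtype.val).card = s.card :=
      card_image_of_injective _ Subtype.val_injective
    rw [← hcards]
    refine hall_cond hS _ ?_
    intro g hg
    obtain ⟨g', _, rfl⟩ := mem_image.mp hg
    exact g'.2

lemma ground_card_le {S : α → Finset ℕ} (hS : IrreducibleRepr S) :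
    (ground S).card ≤ Fintype.card α := by
  obtain ⟨φ, hinj, _⟩ := exists_injection hS
  have := Fintype.card_le_of_injective φ hinj
  simpa [Fintype.card_coe] using this

lemma downSet_card_le {S : α → Finset ℕ} (hS : IrreducibleRepr S)
    (hn : (ground S).card = Fintype.card α) (v : α) :
    (downSet v).card ≤ (S v).card := by
  classical
  obtain ⟨φ, hinj, hmem⟩ := exists_injection hS
  have hbij : Function.Bijective φ := by
    rw [Fintype.bijective_iff_injective_and_card]
    exact ⟨hinj, by simp [Fintype.card_coe, hn]⟩
  set ψ := Function.surjInv hbij.2 with hψ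
  apply card_le_card_of_injOn (fun x => (ψ x : ℕ))
  · intro x hx
    have hxv : x ≤ v := by simpa [downSet] using hx
    have h1 : (ψ x : ℕ) ∈ S (φ (ψ x)) := hmem _
    rw [Function.surjInv_eq hbij.2 x] at h1
    exact hS.1.mono hxv h1
  · intro a _ b _ hab
    have h1 : ψ a = ψ b := Subtype.val_injective hab
    exact Function.injective_surjInv hbij.2 h1

lemma isRepr_canonical : IsRepr (canonical α) := by
  intro x y
  constructor
  · intro hxy u hu
    simp only [canonical, downSet, mem_filter, mem_univ, true_and] at hu ⊢
    exact le_trans hu hxy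
  · intro hsub
    have hx : x ∈ canonical α x := by
      simp [canonical, downSet]
    have := hsub hx
    simpa [canonical, downSet] using this

lemma ground_canonical_card : (ground (canonical α)).card = Fintype.card α := by
  have : ground (canonical α) = Finset.univ := by
    apply Finset.eq_univ_of_forall
    intro x
    refine mem_ground_iff.mpr ⟨x, ?_⟩
    simp [canonical, downSet]
  rw [this, Finset.card_univ]

lemma exists_transport : ∃ S0 : α → Finset ℕ, IsRepr S0 ∧
    (ground S0).card = (ground (canonical α)).card ∧
    ∀ x, (S0 x).card = (canonical α x).card := by
  classical
  obtain ⟨f, hf⟩ := exists_injective_nat α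
  refine ⟨fun x => (canonical α x).image f, ?_, ?_, ?_⟩
  · intro x y
    rw [isRepr_canonical x y]
    exact (Finset.image_subset_image_iff hf).symm
  · have hgr : ground (fun x => (canonical α x).image f) = (ground (canonical α)).image f := by
      ext g
      simp only [mem_ground_iff, mem_image]
      constructor
      · rintro ⟨x, u, hu, rfl⟩
        exact ⟨u, ⟨x, hu⟩, rfl⟩
      · rintro ⟨u, ⟨x, hx⟩, rfl⟩
        exact ⟨x, u, hx, rfl⟩
    rw [hgr, card_image_of_injective _ hf]
  · intro x
    exact card_image_of_injective _ hf

lemma irr_of_eq {β γ : Type} {S0 : α → Finset β} {S1 : α → Finset γ}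
    (h1 : IsRepr S1) (hg : (ground S0).card = (ground S1).card)
    (hc : ∀ x, (S0 x).card = (S1 x).card) (hIrr : IrreducibleRepr S0) :
    IrreducibleRepr S1 := by
  refine ⟨h1, fun T hT hred => ?_⟩
  have hred0 : IsReduction T S0 :=
    ⟨by rw [hg]; exact hred.1, fun x => by rw [hc x]; exact hred.2 x⟩
  have hback := hIrr.2 T hT hred0
  exact ⟨by rw [← hg]; exact hback.1, fun x => by rw [← hc x]; exact hback.2 x⟩

lemma exists_irr : ∃ S : α → Finset ℕ, IrreducibleRepr S := by
  classical
  obtain ⟨S0, hS0, _, _⟩ := exists_transport (α := α)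
  set N : (α → Finset ℕ) → ℕ := fun S => (ground S).card + ∑ x, (S x).card with hN
  set E : Set ℕ := {k | ∃ S : α → Finset ℕ, IsRepr S ∧ N S = k} with hE
  have hne : E.Nonempty := ⟨N S0, S0, hS0, rfl⟩
  obtain ⟨S, hSr, hSN⟩ := Nat.sInf_mem hne
  refine ⟨S, hSr, fun T hT hred => ?_⟩
  have hge : N S ≤ N T := by
    rw [hSN]
    exact Nat.sInf_le ⟨T, hT, rfl⟩
  constructor
  · by_contra hcl
    push_neg at hcl
    have hsum : ∑ y, (T y).card ≤ ∑ y, (S y).card :=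
      Finset.sum_le_sum fun y _ => hred.2 y
    have : N T < N S := by
      simp only [hN]
      omega
    omega
  · intro x
    by_contra hcl
    push_neg at hcl
    have hsum : ∑ y, (T y).card < ∑ y, (S y).card :=
      Finset.sum_lt_sum (fun y _ => hred.2 y) ⟨x, Finset.mem_univ x, hcl⟩
    have hg1 : (ground T).card ≤ (ground S).card := hred.1
    have : N T < N S := by
      simp only [hN]
      omega
    omega

end Aux

/-- `iir P = |P|` iff the canonical inclusion representation is irreducible. -/
theorem iir_eq_card_iff_canonical_irreducible (α : Type) [PartialOrder α] [Fintype α]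
    [Nonempty α] :
    iir α = Fintype.card α ↔ IrreducibleRepr (canonical α) := by
  classical
  have hbound : ∀ w ∈ {w | ∃ S : α → Finset ℕ, IrreducibleRepr S ∧ (ground S).card = w},
      w ≤ Fintype.card α := by
    rintro w ⟨S, hS, rfl⟩
    exact ground_card_le hS
  have hWne : Set.Nonempty {w | ∃ S : α → Finset ℕ, IrreducibleRepr S ∧ (ground S).card = w} := by
    obtain ⟨S, hS⟩ := exists_irr (α := α)
    exact ⟨(ground S).card, S, hS, rfl⟩
  have hbdd : BddAbove {w | ∃ S : α → Finset ℕ, IrreducibleRepr S ∧ (ground S).card = w} :=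
    ⟨Fintype.card α, hbound⟩
  constructor
  · intro hiir
    have hmem : Fintype.card α ∈
        {w | ∃ S : α → Finset ℕ, IrreducibleRepr S ∧ (ground S).card = w} := by
      rw [← hiir]
      exact Nat.sSup_mem hWne hbdd
    obtain ⟨S, hS, hSn⟩ := hmem
    refine ⟨isRepr_canonical, fun T hT hred => ?_⟩
    have hd : ∀ v, (downSet v).card ≤ (S v).card := downSet_card_le hS hSn
    have hredS : IsReduction T S := by
      refine ⟨?_, fun x => le_trans (hred.2 x) (hd x)⟩
      calc (ground T).card ≤ (ground (canonical α)).card := hred.1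
        _ = Fintype.card α := ground_canonical_card
        _ = (ground S).card := hSn.symm
    have hback := hS.2 T hT hredS
    refine ⟨?_, fun x => le_trans (hd x) (hback.2 x)⟩
    calc (ground (canonical α)).card = (ground S).card := by
          rw [ground_canonical_card, hSn]
      _ ≤ (ground T).card := hback.1
  · intro hcan
    obtain ⟨S0, hS0r, hS0g, hS0c⟩ := exists_transport (α := α)
    have hS0irr : IrreducibleRepr S0 :=
      irr_of_eq hS0r hS0g.symm (fun x => (hS0c x).symm) hcan
    have hnW : Fintype.card α ∈
        {w | ∃ S : α → Finset ℕ, IrreducibleRepr S ∧ (ground S).card = w} :=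
      ⟨S0, hS0irr, by rw [hS0g, ground_canonical_card]⟩
    exact le_antisymm (csSup_le hWne hbound) (le_csSup hbdd hnW)
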